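/- arXiv:2010.11486 — 2 statements merged into one kernel-verified Lean document; each statement's English description precedes it below -/
import Mathlib

section
/- Let f : Set V → ℝ be monotone with f(∅) ≥ 0, let OPT be an optimal solution with |OPT| ≤ B, and suppose that for every set X with |X| < B there exists an element v* ∉ X with f(X ∪ {v*}) - f(X) ≥ (α/B)·(f(OPT) - f(X)), where 0 < α ≤ 1. Then the greedy procedure that starts from ∅ and adds such a maximal-gain element for j steps produces a set S_j with f(S_j) ≥ (1 - (1 - α/B)^j) · f(OPT). -/
/-- Greedy induction: if `f` is monotone with `f ∅ ≥ 0`, `OPT` has at most `B` elements,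
every set `X` with `|X| < B` admits an element `v ∉ X` closing an `α/B` fraction of the
gap to `f OPT`, and `S` is a greedy sequence whose steps each close an `α/B` fraction of
the remaining gap, then `f (S j) ≥ (1 - (1 - α/B)^j) · f OPT` for all `j ≤ B`. -/
theorem stmt_3 {V : Type*} [DecidableEq V] (f : Finset V → ℝ)
    (hmono : ∀ A B : Finset V, A ⊆ B → f A ≤ f B) (hf0 : 0 ≤ f ∅)
    (B : ℕ) (hB : 1 ≤ B) (α : ℝ) (hα : 0 < α) (hα1 : α ≤ 1)
    (OPT : Finset V) (hOPT : OPT.card ≤ B)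
    (hgain : ∀ X : Finset V, X.card < B →
      ∃ v ∉ X, f (insert v X) - f X ≥ α / B * (f OPT - f X))
    (S : ℕ → Finset V) (hS0 : S 0 = ∅)
    (hstep : ∀ j : ℕ, j + 1 ≤ B → ∃ v ∉ S j, S (j + 1) = insert v (S j) ∧
      f (S (j + 1)) - f (S j) ≥ α / B * (f OPT - f (S j))) :
    ∀ j ≤ B, f (S j) ≥ (1 - (1 - α / B) ^ j) * f OPT := by
  have hBpos : (0 : ℝ) < B := by exact_mod_cast hB
  have hfrac : α / B ≤ 1 := by
    rw [div_le_one hBpos]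
    calc α ≤ 1 := hα1
    _ ≤ B := by exact_mod_cast hB
  have hfrac0 : 0 < α / B := div_pos hα hBpos
  intro j
  induction j with
  | zero =>
    intro _
    simpa [hS0] using hf0
  | succ n ih =>
    intro hn
    have ihn := ih (le_of_lt (Nat.lt_of_succ_le hn))
    obtain ⟨v, _, _, hge⟩ := hstep n hn
    have key : f (S (n + 1)) ≥ (1 - α / B) * f (S n) + α / B * f OPT := by
      nlinarith [hge]
    have h1 : (1 - α / B) * f (S n) ≥ (1 - α / B) * ((1 - (1 - α / B) ^ n) * f OPT) :=
      mul_le_mul_of_nonneg_left ihn (by linarith)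
    calc f (S (n + 1)) ≥ (1 - α / B) * f (S n) + α / B * f OPT := key
      _ ≥ (1 - α / B) * ((1 - (1 - α / B) ^ n) * f OPT) + α / B * f OPT := by linarith
      _ = (1 - (1 - α / B) ^ (n + 1)) * f OPT := by ring
end

section
/- Let f : Finset V → ℝ₊ be a monotone α-submodular function (0 < α ≤ 1 constant) with uniform constraint |X| ≤ B, and let m = o(B). Every solution P_i produced by DGS, obtained by greedily adding B - m elements of maximal marginal gain and then adding m arbitrary further elements, satisfies f(P_i) ≥ (1 - o(1)) · (1 - e^(-α)) · f(OPT). -/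
/-!
Let `g = f OPT - f S` be the gap of the current greedy set `S`. Adding all of `OPT` to `S` gains
at least `g`; by `α`-submodularity the marginal gains of the at most `B` single elements of `OPT`
over `S` add up to at least `α g`, and the greedy element gains at least as much as each of them.
So every greedy step shrinks the gap by the factor `1 - α / B`, and after `B - m` steps from `∅`
the gap is at most `(1 - α / B) ^ (B - m) f OPT`. Monotonicity passes the bound on to `P`.
-/

section Greedy

variable {V : Type*} [DecidableEq V] {f : Finset V → ℝ} {α : ℝ}

lemma mul_sub_le_sum_marginal
    (hsub : ∀ (A B : Finset V) (v : V), A ⊆ B → v ∉ B →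
      f (insert v A) - f A ≥ α * (f (insert v B) - f B))
    (A T : Finset V) :
    α * (f (A ∪ T) - f A) ≤ ∑ v ∈ T, (f (insert v A) - f A) := by
  induction T using Finset.induction_on with
  | empty => simp
  | insert v T hvT ih =>
    rw [Finset.sum_insert hvT, Finset.union_insert]
    by_cases hvA : v ∈ A
    · simpa [hvA] using ih
    · have hv : v ∉ A ∪ T := by simp [hvA, hvT]
      linear_combination hsub A (A ∪ T) v Finset.subset_union_left hv + ih

lemma sub_le_one_sub_div_mul_of_greedy_step
    (hmono : ∀ A B : Finset V, A ⊆ B → f A ≤ f B)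
    (hsub : ∀ (A B : Finset V) (v : V), A ⊆ B → v ∉ B →
      f (insert v A) - f A ≥ α * (f (insert v B) - f B))
    (hα : 0 ≤ α) {B : ℕ} (hB : 0 < B) {OPT S : Finset V} (hOPT : OPT.card ≤ B) {v : V}
    (hgreedy : ∀ w ∉ S, f (insert w S) - f S ≤ f (insert v S) - f S) :
    f OPT - f (insert v S) ≤ (1 - α / B) * (f OPT - f S) := by
  set gain := f (insert v S) - f S
  have hgain : 0 ≤ gain := sub_nonneg.2 (hmono _ _ (Finset.subset_insert v S))
  have hle_gain : ∀ w, f (insert w S) - f S ≤ gain := by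
    intro w
    by_cases hw : w ∈ S
    · simpa [hw] using hgain
    · exact hgreedy w hw
  have hsum : ∑ w ∈ OPT, (f (insert w S) - f S) ≤ B * gain :=
    calc ∑ w ∈ OPT, (f (insert w S) - f S)
        ≤ ∑ _w ∈ OPT, gain := Finset.sum_le_sum fun w _ => hle_gain w
      _ = OPT.card * gain := by rw [Finset.sum_const, nsmul_eq_mul]
      _ ≤ B * gain := by gcongr
  have hcover : α * (f OPT - f S) ≤ α * (f (S ∪ OPT) - f S) := by
    gcongr
    exact hmono _ _ Finset.subset_union_right
  have hBpos : (0 : ℝ) < B := by exact_mod_cast hB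
  have hdecrease : α / B * (f OPT - f S) ≤ gain := by
    rw [div_mul_eq_mul_div, div_le_iff₀ hBpos]
    linarith [mul_sub_le_sum_marginal hsub S OPT]
  linear_combination hdecrease

lemma greedy_gap_le_pow
    (hmono : ∀ A B : Finset V, A ⊆ B → f A ≤ f B)
    (hsub : ∀ (A B : Finset V) (v : V), A ⊆ B → v ∉ B →
      f (insert v A) - f A ≥ α * (f (insert v B) - f B))
    (hα : 0 ≤ α) {B : ℕ} (hB : 0 < B) (hαB : α ≤ B)
    {OPT : Finset V} (hOPT : OPT.card ≤ B)
    (S : ℕ → Finset V) (n : ℕ)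
    (hstep : ∀ j < n, ∃ v, S (j + 1) = insert v (S j) ∧
      ∀ w ∉ S j, f (insert w (S j)) - f (S j) ≤ f (S (j + 1)) - f (S j)) :
    ∀ j ≤ n, f OPT - f (S j) ≤ (1 - α / B) ^ j * (f OPT - f (S 0)) := by
  have hq : 0 ≤ 1 - α / B := sub_nonneg.2 (div_le_one_of_le₀ hαB (Nat.cast_nonneg B))
  intro j
  induction j with
  | zero => simp
  | succ j ih =>
    intro hj
    obtain ⟨v, hSsucc, hgreedy⟩ := hstep j hj
    rw [hSsucc] at hgreedy ⊢
    calc f OPT - f (insert v (S j))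
        ≤ (1 - α / B) * (f OPT - f (S j)) :=
          sub_le_one_sub_div_mul_of_greedy_step hmono hsub hα hB hOPT hgreedy
      _ ≤ (1 - α / B) * ((1 - α / B) ^ j * (f OPT - f (S 0))) := by
          gcongr
          exact ih (j.le_succ.trans hj)
      _ = (1 - α / B) ^ (j + 1) * (f OPT - f (S 0)) := by ring

end Greedy

theorem stmt_4_general {V : Type*} [DecidableEq V] (f : Finset V → ℝ)
    (hmono : ∀ A B : Finset V, A ⊆ B → f A ≤ f B) (hf0 : f ∅ = 0)
    (α : ℝ) (hα : 0 < α) (hα1 : α ≤ 1)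
    (hsub : ∀ (A B : Finset V) (v : V), A ⊆ B → v ∉ B →
      f (insert v A) - f A ≥ α * (f (insert v B) - f B))
    (B m : ℕ) (hB : 1 ≤ B)
    (OPT : Finset V) (hOPTcard : OPT.card ≤ B)
    (S : ℕ → Finset V) (hS0 : S 0 = ∅)
    (hstep : ∀ j : ℕ, j < B - m → ∃ v ∉ S j, S (j + 1) = insert v (S j) ∧
      ∀ w ∉ S j, f (insert w (S j)) - f (S j) ≤ f (S (j + 1)) - f (S j))
    (P : Finset V) (hSP : S (B - m) ⊆ P) :
    f P ≥ (1 - (1 - α / B) ^ (B - m)) * f OPT := by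
  have hαB : α ≤ B := hα1.trans (by exact_mod_cast hB)
  have hgreedy j (hj : j < B - m) := (hstep j hj).imp fun _ h => h.2
  have hgap := greedy_gap_le_pow hmono hsub hα.le hB hαB hOPTcard S (B - m) hgreedy _ le_rfl
  rw [hS0, hf0, sub_zero] at hgap
  have hSP_le := hmono _ _ hSP
  linear_combination hSP_le + hgap

/-- DGS guarantee (non-asymptotic form): for a monotone `α`-submodular function `f`
(`0 < α ≤ 1`, `f ∅ = 0`) with uniform constraint `|X| ≤ B`, if `S` is the greedy
sequence adding a maximal-marginal-gain element at each of the first `B - m` steps,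
then every solution `P` extending `S (B - m)` satisfies
`f P ≥ (1 - (1 - α/B)^(B-m)) · f OPT`.  (For `m = o(B)` and constant `α` this is
`(1 - o(1)) (1 - e^{-α}) f OPT`.) -/
theorem stmt_4 {V : Type*} [Fintype V] [DecidableEq V] (f : Finset V → ℝ)
    (hmono : ∀ A B : Finset V, A ⊆ B → f A ≤ f B) (hf0 : f ∅ = 0)
    (α : ℝ) (hα : 0 < α) (hα1 : α ≤ 1)
    (hsub : ∀ (A B : Finset V) (v : V), A ⊆ B → v ∉ B →
      f (insert v A) - f A ≥ α * (f (insert v B) - f B))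
    (B m : ℕ) (hB : 1 ≤ B) (hm : m ≤ B) (hn : B ≤ Fintype.card V)
    (OPT : Finset V) (hOPTcard : OPT.card ≤ B)
    (hOPT : ∀ X : Finset V, X.card ≤ B → f X ≤ f OPT)
    (S : ℕ → Finset V) (hS0 : S 0 = ∅)
    (hstep : ∀ j : ℕ, j < B - m → ∃ v ∉ S j, S (j + 1) = insert v (S j) ∧
      ∀ w ∉ S j, f (insert w (S j)) - f (S j) ≤ f (S (j + 1)) - f (S j))
    (P : Finset V) (hSP : S (B - m) ⊆ P) (hPcard : P.card ≤ B) :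
    f P ≥ (1 - (1 - α / B) ^ (B - m)) * f OPT :=
  stmt_4_general f hmono hf0 α hα hα1 hsub B m hB OPT hOPTcard S hS0 hstep P hSP
end
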